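/- Let φ: [0,∞) → [0,∞] be a Young function (convex, increasing, φ(0)=0, φ(x)/x → ∞) with complementary function φ*(y) = sup_{x>0}(xy − φ(x)). Then for every c ≥ 0, inf_{λ>0} (φ(λ) + c)/λ = (φ*)⁻¹(c), where (φ*)⁻¹(c) = inf{s > 0 : φ*(s) > c} is the generalized inverse. -/
import Mathlib


open Set Filter

/-- For a Young function `φ` (convex, increasing, `φ 0 = 0`, superlinear)
with complementary function `φ*(y) = sup_{x>0} (x y − φ x)`, for every `c ≥ 0` one has
`inf_{λ>0} (φ λ + c)/λ = (φ*)⁻¹(c)`, where `(φ*)⁻¹(c) = inf {s > 0 : φ*(s) > c}`. -/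
theorem stmt_1 (φ : ℝ → ℝ)
    (hconv : ConvexOn ℝ (Ici (0:ℝ)) φ)
    (hmono : MonotoneOn φ (Ici (0:ℝ)))
    (h0 : φ 0 = 0)
    (hsuper : Tendsto (fun x => φ x / x) atTop atTop)
    (φstar : ℝ → ℝ)
    (hφstar : ∀ y, φstar y = sSup {z : ℝ | ∃ x > (0:ℝ), z = x * y - φ x})
    (c : ℝ) (hc : 0 ≤ c) :
    sInf {r : ℝ | ∃ l > (0:ℝ), r = (φ l + c) / l}
      = sInf {s : ℝ | 0 < s ∧ c < φstar s} := by
  -- φ is nonneg on [0,∞)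
  have hφ0 : ∀ x : ℝ, 0 ≤ x → 0 ≤ φ x := by
    intro x hx
    have := hmono (show (0:ℝ) ∈ Ici (0:ℝ) from mem_Ici.mpr le_rfl) (show x ∈ Ici (0:ℝ) from mem_Ici.mpr hx) hx
    linarith [h0 ▸ this]
  set A : Set ℝ := {r : ℝ | ∃ l > (0:ℝ), r = (φ l + c) / l} with hA
  have hAne : A.Nonempty := ⟨(φ 1 + c) / 1, 1, one_pos, rfl⟩
  have hAbd : BddBelow A := by
    refine ⟨0, ?_⟩
    rintro r ⟨l, hl, rfl⟩
    exact div_nonneg (add_nonneg (hφ0 l hl.le) hc) hl.le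
  have hm0 : 0 ≤ sInf A := le_csInf hAne (by
    rintro r ⟨l, hl, rfl⟩
    exact div_nonneg (add_nonneg (hφ0 l hl.le) hc) hl.le)
  -- For each s, the set defining φstar s is nonempty and bounded above
  have hSne : ∀ s : ℝ, ({z : ℝ | ∃ x > (0:ℝ), z = x * s - φ x}).Nonempty :=
    fun s => ⟨1 * s - φ 1, 1, one_pos, rfl⟩
  have hSbd : ∀ s : ℝ, BddAbove {z : ℝ | ∃ x > (0:ℝ), z = x * s - φ x} := by
    intro s
    obtain ⟨M, hM⟩ := (hsuper.eventually_ge_atTop s).exists_forall_of_atTop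
    refine ⟨(max M 1) * |s|, ?_⟩
    rintro z ⟨x, hx, rfl⟩
    rcases le_or_gt x (max M 1) with hxM | hxM
    · have h1 : x * s - φ x ≤ x * s := by linarith [hφ0 x hx.le]
      have h2 : x * s ≤ x * |s| := mul_le_mul_of_nonneg_left (le_abs_self s) hx.le
      have h3 : x * |s| ≤ (max M 1) * |s| :=
        mul_le_mul_of_nonneg_right hxM (abs_nonneg s)
      linarith
    · have hxM' : M ≤ x := le_trans (le_max_left M 1) hxM.le
      have hsx : s ≤ φ x / x := hM x hxM'
      have hx1 : (0:ℝ) < x := hx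
      have : x * s ≤ φ x := by
        have := mul_le_mul_of_nonneg_left hsx hx.le
        rwa [mul_div_cancel₀ _ (ne_of_gt hx)] at this
      have hpos : (0:ℝ) ≤ (max M 1) * |s| :=
        mul_nonneg (le_trans zero_le_one (le_max_right M 1)) (abs_nonneg s)
      linarith
  -- The right-hand set equals Ioi (sInf A)
  have hBset : {s : ℝ | 0 < s ∧ c < φstar s} = Ioi (sInf A) := by
    ext s
    simp only [mem_setOf_eq, mem_Ioi]
    constructor
    · rintro ⟨hs, hcs⟩
      rw [hφstar s, lt_csSup_iff (hSbd s) (hSne s)] at hcs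
      obtain ⟨z, ⟨x, hx, rfl⟩, hz⟩ := hcs
      have : (φ x + c) / x < s := by
        rw [div_lt_iff₀ hx]; linarith [hz]
      calc sInf A ≤ (φ x + c) / x := csInf_le hAbd ⟨x, hx, rfl⟩
        _ < s := this
    · intro hs
      have hs0 : 0 < s := lt_of_le_of_lt hm0 hs
      refine ⟨hs0, ?_⟩
      rw [hφstar s, lt_csSup_iff (hSbd s) (hSne s)]
      obtain ⟨r, ⟨x, hx, rfl⟩, hrs⟩ := (csInf_lt_iff hAbd hAne).mp hs
      refine ⟨x * s - φ x, ⟨x, hx, rfl⟩, ?_⟩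
      rw [div_lt_iff₀ hx] at hrs
      linarith
  rw [hBset, csInf_Ioi]
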